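/- arXiv:1405.2017 — 5 statements merged into one kernel-verified Lean document; each statement's English description precedes it below -/
import Mathlib

section
/- Let λ > 0, R > 0, T_d > 0, η_c > 2, η_d > 2. Then ∫₀^R (2r/R²)·exp(−πλ·r^{2η_d/η_c}/T_d^{2/η_c}) dr = (η_c·T_d^{2/η_d})/(η_d·R²)·(1/(πλ))^{η_c/η_d}·γ(η_c/η_d, πλ·(R^{η_d}/T_d)^{2/η_c}), where γ(a,b) = ∫₀^b x^{a−1} e^{−x} dx is the lower incomplete gamma function. -/
/-!
With `b = πλ / T_d^{2/η_c}` and `p = 2η_d/η_c` the integrand is `(2/R²) r exp(-b r^p)`, and the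
substitution `u = b r^p` turns `∫₀^R r^q exp(-b r^p) dr` into `b^{-(q+1)/p} / p · γ((q+1)/p, b R^p)`.
-/

open Real MeasureTheory

/-- Lower incomplete gamma function γ(a,b) = ∫₀^b x^{a-1} e^{-x} dx. -/
noncomputable def lowerGamma (a b : ℝ) : ℝ := ∫ x in (0:ℝ)..b, x ^ (a - 1) * Real.exp (-x)

open Set

theorem integral_rpow_mul_exp_neg_mul_rpow_eq_lowerGamma {p q b T : ℝ} (hp : 0 < p) (hb : 0 < b)
    (hT : 0 ≤ T) :
    ∫ x in (0:ℝ)..T, x ^ q * exp (-b * x ^ p) =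
      b ^ (-(q + 1) / p) * (1 / p) * lowerGamma ((q + 1) / p) (b * T ^ p) := by
  set s := (q + 1) / p
  have hpos : ∀ x ∈ Ioo (min 0 T) (max 0 T), 0 < x := fun x hx => by
    rw [min_eq_left hT] at hx; exact hx.1
  -- `u ↦ b u^p` is monotone, so the substitution needs no regularity of the gamma integrand at 0.
  have hsubst := intervalIntegral.integral_comp_mul_deriv_of_deriv_nonneg (f := fun x => b * x ^ p)
    (g := fun u => u ^ (s - 1) * exp (-u))
    ((continuous_const.mul (continuous_rpow_const hp.le)).continuousOn)
    (fun x hx => (hasDerivAt_rpow_const (Or.inl (hpos x hx).ne')).const_mul b)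
    (fun x hx => by have := hpos x hx; positivity)
  simp only [Function.comp_apply, zero_rpow hp.ne', mul_zero] at hsubst
  rw [lowerGamma, ← hsubst, ← intervalIntegral.integral_const_mul]
  refine intervalIntegral.integral_congr_ae (Filter.Eventually.of_forall fun x hx => ?_)
  rw [uIoc_of_le hT] at hx
  have hx0 : 0 < x := hx.1
  have hb_pow : b ^ (-s) * b ^ (s - 1) * b = 1 := by
    rw [← rpow_add hb, ← rpow_add_one hb.ne', show -s + (s - 1) + 1 = 0 by ring, rpow_zero]
  have hx_pow : (x ^ p) ^ (s - 1) * x ^ (p - 1) = x ^ q := by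
    rw [← rpow_mul hx0.le, ← rpow_add hx0]; congr 1; simp only [s]; field_simp; ring
  rw [mul_rpow hb.le (rpow_nonneg hx0.le _), neg_div, neg_mul]
  calc x ^ q * rexp (-(b * x ^ p))
      = (b ^ (-s) * b ^ (s - 1) * b) * (1 / p * p) * ((x ^ p) ^ (s - 1) * x ^ (p - 1))
          * rexp (-(b * x ^ p)) := by rw [hb_pow, hx_pow, one_div_mul_cancel hp.ne']; ring
    _ = _ := by ring

theorem stmt0 (lam R Td ηc ηd : ℝ) (hlam : 0 < lam) (hR : 0 < R) (hTd : 0 < Td)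
    (hc : 2 < ηc) (hd : 2 < ηd) :
    (∫ r in (0:ℝ)..R, (2 * r / R ^ 2) *
        Real.exp (-(π * lam * r ^ (2 * ηd / ηc) / Td ^ (2 / ηc)))) =
      (ηc * Td ^ (2 / ηd)) / (ηd * R ^ 2) * (1 / (π * lam)) ^ (ηc / ηd) *
        lowerGamma (ηc / ηd) (π * lam * (R ^ ηd / Td) ^ (2 / ηc)) := by
  have hηc : 0 < ηc := by linarith
  have hηd : 0 < ηd := by linarith
  set b := π * lam / Td ^ (2 / ηc)
  set p := 2 * ηd / ηc
  have hb : 0 < b := by positivity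
  have hp : 0 < p := by positivity
  have hshape : (1 + 1) / p = ηc / ηd := by simp only [p]; field_simp; ring
  have harg : b * R ^ p = π * lam * (R ^ ηd / Td) ^ (2 / ηc) := by
    rw [div_rpow (rpow_nonneg hR.le ηd) hTd.le, ← rpow_mul hR.le]
    simp only [b, p]; ring_nf
  have hscale : b ^ (-(ηc / ηd)) = Td ^ (2 / ηd) * (1 / (π * lam)) ^ (ηc / ηd) := by
    rw [rpow_neg hb.le, div_rpow (by positivity) (rpow_nonneg hTd.le _), ← rpow_mul hTd.le,
      one_div, inv_rpow (by positivity), inv_div]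
    field_simp
  calc _ = 2 / R ^ 2 * ∫ r in (0:ℝ)..R, r ^ (1:ℝ) * exp (-b * r ^ p) := by
        rw [← intervalIntegral.integral_const_mul]
        refine intervalIntegral.integral_congr fun r _ => ?_
        simp only [b, p, rpow_one]; ring_nf
    _ = _ := by
        rw [integral_rpow_mul_exp_neg_mul_rpow_eq_lowerGamma hp hb hR.le, neg_div, hshape, harg,
          hscale]
        simp only [p]; field_simp
end

section
/- Let λ > 0, ρ_o > 0, P_u > 0, η_c > 2, α > 0. Then ∫₀^{P_u} x^α · (2πλ x^{2/η_c − 1} e^{−πλ(x/ρ_o)^{2/η_c}}) / (η_c ρ_o^{2/η_c} (1 − e^{−πλ(P_u/ρ_o)^{2/η_c}})) dx = ρ_o^α · γ(αη_c/2 + 1, πλ(P_u/ρ_o)^{2/η_c}) / ((πλ)^{αη_c/2} · (1 − e^{−πλ(P_u/ρ_o)^{2/η_c}})), where γ is the lower incomplete gamma function. -/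
open Real MeasureTheory

/-!
The substitution `u = c (x / ρ) ^ q` with `c = π λ`, `q = 2 / η_c` turns the Weibull-type density
into `du` and `x ^ α` into `ρ ^ α c ^ (-α / q) u ^ (α / q)`, so the truncated moment is a lower
incomplete gamma integral over `[0, c (P_u / ρ) ^ q]`, divided by the truncation constant.
-/

theorem hasDerivAt_const_mul_div_rpow {c ρ q x : ℝ} (hρ : 0 < ρ) (hx : 0 < x) :
    HasDerivAt (fun y => c * (y / ρ) ^ q) (c * q / ρ ^ q * x ^ (q - 1)) x := by
  refine ((((hasDerivAt_id x).div_const ρ).rpow_const (p := q)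
    (Or.inl (by positivity))).const_mul c).congr_deriv ?_
  rw [id, div_rpow hx.le hρ.le, rpow_sub_one hρ.ne']
  field_simp

theorem const_mul_div_rpow_rpow_div {c ρ q x : ℝ} (α : ℝ) (hc : 0 < c) (hρ : 0 < ρ) (hq : q ≠ 0)
    (hx : 0 ≤ x) : (c * (x / ρ) ^ q) ^ (α / q) = c ^ (α / q) * x ^ α / ρ ^ α := by
  rw [mul_rpow hc.le (by positivity), ← rpow_mul (by positivity), mul_div_cancel₀ α hq,
    div_rpow hx hρ.le, mul_div_assoc]

theorem integral_rpow_mul_weibull_density_eq_lowerGamma (α : ℝ) {c ρ q P : ℝ} (hc : 0 < c)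
    (hρ : 0 < ρ) (hq : 0 < q) (hP : 0 ≤ P) :
    ∫ x in 0..P, x ^ α * (c * q / ρ ^ q * x ^ (q - 1) * exp (-(c * (x / ρ) ^ q))) =
      ρ ^ α / c ^ (α / q) * lowerGamma (α / q + 1) (c * (P / ρ) ^ q) := by
  have hpos : ∀ x ∈ Set.Ioo (min 0 P) (max 0 P), 0 < x := fun x hx => by simpa [hP] using hx.1
  have hsubst := intervalIntegral.integral_comp_mul_deriv_of_deriv_nonneg
    (f := fun x => c * (x / ρ) ^ q) (g := fun u => u ^ (α / q) * exp (-u))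
    (Continuous.continuousOn <|
      continuous_const.mul ((continuous_id.div_const ρ).rpow_const fun _ => Or.inr hq.le))
    (fun x hx => hasDerivAt_const_mul_div_rpow hρ (hpos x hx))
    (fun x hx => by have := hpos x hx; positivity)
  simp only [zero_div, zero_rpow hq.ne', mul_zero] at hsubst
  rw [lowerGamma, add_sub_cancel_right, ← hsubst, ← intervalIntegral.integral_const_mul]
  refine intervalIntegral.integral_congr_ae (Filter.Eventually.of_forall fun x hx => ?_)
  rw [Set.uIoc_of_le hP] at hx
  simp only [Function.comp_apply, const_mul_div_rpow_rpow_div α hc hρ hq.ne' hx.1.le]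
  have : ρ ^ α ≠ 0 := by positivity
  have : c ^ (α / q) ≠ 0 := by positivity
  field_simp

theorem stmt3_general (lam ρo Pu ηc α : ℝ) (hlam : 0 < lam) (hρ : 0 < ρo) (hPu : 0 < Pu)
    (hc : 2 < ηc) :
    (∫ x in (0:ℝ)..Pu,
        x ^ α * (2 * π * lam * x ^ (2 / ηc - 1) *
            Real.exp (-(π * lam * (x / ρo) ^ (2 / ηc)))) /
          (ηc * ρo ^ (2 / ηc) * (1 - Real.exp (-(π * lam * (Pu / ρo) ^ (2 / ηc)))))) =
      ρo ^ α * lowerGamma (α * ηc / 2 + 1) (π * lam * (Pu / ρo) ^ (2 / ηc)) /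
        ((π * lam) ^ (α * ηc / 2) *
          (1 - Real.exp (-(π * lam * (Pu / ρo) ^ (2 / ηc))))) := by
  have hq : 0 < 2 / ηc := div_pos two_pos (by linarith)
  calc _ = (∫ x in (0:ℝ)..Pu, x ^ α * (π * lam * (2 / ηc) / ρo ^ (2 / ηc) * x ^ (2 / ηc - 1) *
            exp (-(π * lam * (x / ρo) ^ (2 / ηc))))) /
          (1 - exp (-(π * lam * (Pu / ρo) ^ (2 / ηc)))) := by
        rw [← intervalIntegral.integral_div]
        congr 1 with x
        field_simp
    _ = _ := by
        rw [integral_rpow_mul_weibull_density_eq_lowerGamma α (by positivity) hρ hq hPu.le,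
          show α / (2 / ηc) = α * ηc / 2 by field_simp, div_mul_eq_mul_div, div_div]

theorem stmt3 (lam ρo Pu ηc α : ℝ) (hlam : 0 < lam) (hρ : 0 < ρo) (hPu : 0 < Pu)
    (hc : 2 < ηc) (hα : 0 < α) :
    (∫ x in (0:ℝ)..Pu,
        x ^ α * (2 * π * lam * x ^ (2 / ηc - 1) *
            Real.exp (-(π * lam * (x / ρo) ^ (2 / ηc)))) /
          (ηc * ρo ^ (2 / ηc) * (1 - Real.exp (-(π * lam * (Pu / ρo) ^ (2 / ηc)))))) =
      ρo ^ α * lowerGamma (α * ηc / 2 + 1) (π * lam * (Pu / ρo) ^ (2 / ηc)) /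
        ((π * lam) ^ (α * ηc / 2) *
          (1 - Real.exp (-(π * lam * (Pu / ρo) ^ (2 / ηc))))) :=
  stmt3_general lam ρo Pu ηc α hlam hρ hPu hc
end

section
/- Let X_d be a random variable with pdf f_{X_d}(x) = (2 x^{2/η_d − 1})/(η_d (ρ_o R^{η_d})^{2/η_d}) on [0, ρ_o R^{η_d}], and X_c independent with pdf f_{X_c}(x) = (2πλ x^{2/η_c − 1} e^{−πλ(x/ρ_o)^{2/η_c}})/(η_c ρ_o^{2/η_c}) on [0,∞), where ρ_o R^{η_d} = P_u. Then for 0 ≤ x ≤ P_u, the conditional density of X_d given the event {X_d ≤ T_d X_c} satisfies f_{X_d | X_d ≤ T_d X_c}(x) = (2 x^{2/η_d − 1} (πλ)^{η_c/η_d} e^{−πλ(x/(T_d ρ_o))^{2/η_c}}) / (η_c (T_d ρ_o)^{2/η_d} γ(η_c/η_d, πλ(P_u/(T_dρ_o))^{2/η_c})). -/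
/-!
Given `X_d = z`, the conditioning event has probability `P(X_c ≥ z / T_d)`. As `X_c` is
Weibull with shape `2/η_c`, this tail is `exp(-c z^{2/η_c})` with `c = πλ / (T_d ρ_o)^{2/η_c}`.
Hence the conditional density is `z^{2/η_d - 1} exp(-c z^{2/η_c})` normalised over `[0, P_u]`,
and the substitution `u = c z^{2/η_c}` turns the normalising integral into `γ(η_c/η_d, c P_u^{2/η_c})`.
-/

open Real MeasureTheory

/-- pdf of X_d = ρ_o r_d^{η_d}, r_d uniform-in-disk of radius R. -/
noncomputable def fXd (ρo R ηd : ℝ) (x : ℝ) : ℝ :=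
  2 * x ^ (2 / ηd - 1) / (ηd * (ρo * R ^ ηd) ^ (2 / ηd))

/-- pdf of X_c = ρ_o r_c^{η_c}, r_c Rayleigh with pdf 2πλ r e^{-πλ r²}. -/
noncomputable def fXc (lam ρo ηc : ℝ) (x : ℝ) : ℝ :=
  2 * π * lam * x ^ (2 / ηc - 1) * Real.exp (-(π * lam * (x / ρo) ^ (2 / ηc))) /
    (ηc * ρo ^ (2 / ηc))

open Set Filter

theorem integral_Ioi_weibull_pdf {a p t : ℝ} (ha : 0 < a) (hp : 0 < p) (ht : 0 ≤ t) :
    ∫ y in Ioi t, a * p * y ^ (p - 1) * exp (-(a * y ^ p)) = exp (-(a * t ^ p)) := by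
  have hderiv : ∀ y ∈ Ioi t,
      HasDerivAt (fun y ↦ -exp (-(a * y ^ p))) (a * p * y ^ (p - 1) * exp (-(a * y ^ p))) y := by
    intro y hy
    have hpow := hasDerivAt_rpow_const (p := p) (Or.inl (ht.trans_lt hy).ne')
    exact ((hpow.const_mul a).neg.exp.neg).congr_deriv (by simp only [Pi.neg_apply]; ring)
  have hcont : Continuous fun y : ℝ ↦ -exp (-(a * y ^ p)) := by
    have := continuous_rpow_const hp.le
    fun_prop
  have hlim : Tendsto (fun y : ℝ ↦ -exp (-(a * y ^ p))) atTop (nhds 0) := by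
    simpa using (tendsto_exp_neg_atTop_nhds_zero.comp
      ((tendsto_rpow_atTop hp).const_mul_atTop ha)).neg
  rw [integral_Ioi_of_hasDerivAt_of_nonneg hcont.continuousWithinAt hderiv
    (fun y hy ↦ by have := rpow_nonneg (ht.trans hy.le) (p - 1); positivity) hlim]
  ring

theorem fXc_eq_weibull_pdf {lam ρo ηc y : ℝ} (hρ : 0 < ρo) (hηc : 0 < ηc) (hy : 0 ≤ y) :
    fXc lam ρo ηc y = π * lam / ρo ^ (2 / ηc) * (2 / ηc) * y ^ (2 / ηc - 1) *
      exp (-(π * lam / ρo ^ (2 / ηc) * y ^ (2 / ηc))) := by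
  rw [fXc, div_rpow hy hρ.le]
  field_simp

theorem integral_Ioi_fXc {lam ρo ηc t : ℝ} (hlam : 0 < lam) (hρ : 0 < ρo) (hηc : 0 < ηc)
    (ht : 0 ≤ t) :
    ∫ y in Ioi t, fXc lam ρo ηc y = exp (-(π * lam * (t / ρo) ^ (2 / ηc))) := by
  rw [setIntegral_congr_fun measurableSet_Ioi
      fun y hy ↦ fXc_eq_weibull_pdf hρ hηc (ht.trans hy.le),
    integral_Ioi_weibull_pdf (by positivity) (by positivity) ht, div_rpow ht hρ.le]
  ring_nf

theorem lowerGamma_mul_rpow_eq_integral {p c s P : ℝ} (hp : 0 < p) (hc : 0 < c) (hP : 0 ≤ P) :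
    lowerGamma s (c * P ^ p) =
      p * c ^ s * ∫ z in (0:ℝ)..P, z ^ (p * s - 1) * exp (-(c * z ^ p)) := by
  have hpos : ∀ z ∈ Ioo (min 0 P) (max 0 P), 0 < z := fun z hz ↦
    (le_min le_rfl hP).trans_lt hz.1
  have hsubst := intervalIntegral.integral_comp_mul_deriv_of_deriv_nonneg
    (f := fun z ↦ c * z ^ p) (f' := fun z ↦ c * (p * z ^ (p - 1)))
    (g := fun u ↦ u ^ (s - 1) * exp (-u)) (a := 0) (b := P)
    ((continuous_rpow_const hp.le).const_mul c).continuousOn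
    (fun z hz ↦ (hasDerivAt_rpow_const (Or.inl (hpos z hz).ne')).const_mul c)
    (fun z hz ↦ by have := rpow_nonneg (hpos z hz).le (p - 1); positivity)
  rw [zero_rpow hp.ne', mul_zero] at hsubst
  rw [lowerGamma, ← hsubst, ← intervalIntegral.integral_const_mul,
    intervalIntegral.integral_of_le hP, intervalIntegral.integral_of_le hP]
  refine setIntegral_congr_fun measurableSet_Ioc fun z hz ↦ ?_
  have hz : 0 < z := hz.1
  simp only [Function.comp_apply]
  have hcs : c ^ s = c ^ (s - 1) * c := by rw [← rpow_add_one hc.ne', sub_add_cancel]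
  rw [mul_rpow hc.le (rpow_nonneg hz.le _), ← rpow_mul hz.le,
    show p * s - 1 = p * (s - 1) + (p - 1) by ring, rpow_add hz, hcs]
  ring

theorem lowerGamma_pos {s b : ℝ} (hs : 0 < s) (hb : 0 < b) : 0 < lowerGamma s b :=
  intervalIntegral.intervalIntegral_pos_of_pos_on
    ((intervalIntegral.intervalIntegrable_rpow' (by linarith)).mul_continuousOn
      (continuous_exp.comp continuous_neg).continuousOn)
    (fun u hu ↦ mul_pos (rpow_pos_of_pos hu.1 _) (exp_pos _)) hb

theorem stmt6 (lam ρo R Td Pu ηc ηd : ℝ) (hlam : 0 < lam) (hρ : 0 < ρo) (hR : 0 < R)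
    (hTd : 0 < Td) (hc : 2 < ηc) (hd : 2 < ηd) (hPu : ρo * R ^ ηd = Pu) :
    ∀ x : ℝ, 0 ≤ x → x ≤ Pu →
      (fXd ρo R ηd x * ∫ y in Set.Ioi (x / Td), fXc lam ρo ηc y) /
          (∫ z in (0:ℝ)..Pu, fXd ρo R ηd z * ∫ y in Set.Ioi (z / Td), fXc lam ρo ηc y) =
        (2 * x ^ (2 / ηd - 1) * (π * lam) ^ (ηc / ηd) *
            Real.exp (-(π * lam * (x / (Td * ρo)) ^ (2 / ηc)))) /
          (ηc * (Td * ρo) ^ (2 / ηd) *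
            lowerGamma (ηc / ηd) (π * lam * (Pu / (Td * ρo)) ^ (2 / ηc))) := by
  intro x hx _
  set p := 2 / ηc
  set s := ηc / ηd
  set c := π * lam / (Td * ρo) ^ p
  have hps : p * s = 2 / ηd := by simp only [p, s]; field_simp
  have hPu0 : 0 < Pu := hPu ▸ by positivity
  have hscale : ∀ z, 0 ≤ z → π * lam * (z / (Td * ρo)) ^ p = c * z ^ p := fun z hz ↦ by
    rw [div_rpow hz (by positivity)]; ring
  have htail : ∀ z, 0 ≤ z → ∫ y in Ioi (z / Td), fXc lam ρo ηc y = exp (-(c * z ^ p)) :=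
    fun z hz ↦ by
      rw [integral_Ioi_fXc hlam hρ (by linarith) (by positivity), div_div, hscale z hz]
  set I := ∫ z in (0:ℝ)..Pu, z ^ (p * s - 1) * exp (-(c * z ^ p))
  have hden : ∫ z in (0:ℝ)..Pu, fXd ρo R ηd z * ∫ y in Ioi (z / Td), fXc lam ρo ηc y =
      2 / (ηd * Pu ^ (2 / ηd)) * I := by
    rw [← intervalIntegral.integral_const_mul]
    refine intervalIntegral.integral_congr fun z hz ↦ ?_
    rw [uIcc_of_le hPu0.le] at hz
    simp only [fXd, hPu, htail z hz.1, hps]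
    ring
  have hγ : lowerGamma s (π * lam * (Pu / (Td * ρo)) ^ p) = p * c ^ s * I := by
    rw [hscale Pu hPu0.le, lowerGamma_mul_rpow_eq_integral (by positivity) (by positivity) hPu0.le]
  have hI : 0 < I := by
    have hγpos := hγ ▸ lowerGamma_pos (s := s) (by positivity) (by positivity)
    exact pos_of_mul_pos_right hγpos (by positivity)
  have hcs : c ^ s = (π * lam) ^ s / (Td * ρo) ^ (2 / ηd) := by
    rw [div_rpow (by positivity) (by positivity), ← rpow_mul (by positivity), hps]
  rw [htail x hx, hden, hscale x hx, hγ, hcs, fXd, hPu]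
  simp only [p]
  field_simp
end

section
/- Let λ > 0, ρ_o > 0, P_u > 0, η_c > 2, η_d > 2 and T_d > 1. With X̃_c and X_d as in the T_d ≤ 1 case (X̃_c with truncated pdf 2πλ x^{2/η_c−1}e^{−πλ(x/ρ_o)^{2/η_c}}/(η_c ρ_o^{2/η_c}(1−e^{−πλ(P_u/ρ_o)^{2/η_c}})) on [0,P_u]; X_d independent with pdf 2x^{2/η_d−1}/(η_d P_u^{2/η_d}) on [0,P_u]), one has P{X̃_c < X_d/T_d} = 1/(1 − e^{−πλ(P_u/ρ_o)^{2/η_c}}) − η_c (T_d ρ_o)^{2/η_d} γ(η_c/η_d, πλ(P_u/(T_d ρ_o))^{2/η_c}) / (η_d P_u^{2/η_d} (πλ)^{η_c/η_d} (1 − e^{−πλ(P_u/ρ_o)^{2/η_c}})). -/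
/-!
The substitution `u = k (x / r) ^ p` turns `∫₀^b x^(s-1) e^(-k (x/r)^p) dx` into
`r^s / (p k^(s/p)) · γ(s/p, k (b/r)^p)`. With `s = p` (where `γ(1, t) = 1 - e^(-t)`) this is the
distribution function of `X̃_c`; since `T_d > 1`, the truncation `min (y / T_d) P_u` is inactive,
so the conditional probability given `X_d = y` is `(1 - e^(-πλ (y/(T_d ρ_o))^(2/η_c))) / C` with
`C = 1 - e^(-πλ (P_u/ρ_o)^(2/η_c))` the truncation mass.
Integrating against the density of `X_d` leaves an elementary power integral and a second
instance of the substitution, with `s = 2/η_d`.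
-/

open Real MeasureTheory

lemma lowerGamma_one (b : ℝ) : lowerGamma 1 b = 1 - exp (-b) := by
  simp [lowerGamma, intervalIntegral.integral_comp_neg (fun u => exp u)]

lemma rpow_sub_one_mul_exp_neg_comp_mul_deriv {a p k r x : ℝ} (hk : 0 < k) (hr : 0 < r)
    (hx : 0 < x) :
    (k * (x / r) ^ p) ^ (a - 1) * exp (-(k * (x / r) ^ p)) * (k * (1 / r * p * (x / r) ^ (p - 1)))
      = p * k ^ a / r ^ (a * p) * (x ^ (a * p - 1) * exp (-(k * (x / r) ^ p))) := by
  have ht : 0 < x / r := by positivity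
  rw [mul_rpow hk.le (rpow_nonneg ht.le _), ← rpow_mul ht.le, rpow_sub_one hk.ne',
    rpow_sub_one ht.ne', rpow_sub_one hx.ne', mul_sub, mul_one, rpow_sub ht, mul_comm p a,
    div_rpow hx.le hr.le, div_rpow hx.le hr.le]
  field_simp

lemma integral_rpow_mul_exp_neg_mul_div_rpow {s p k r b : ℝ} (hp : 0 < p) (hk : 0 < k)
    (hr : 0 < r) (hb : 0 ≤ b) :
    ∫ x in (0:ℝ)..b, x ^ (s - 1) * exp (-(k * (x / r) ^ p)) =
      r ^ s / (p * k ^ (s / p)) * lowerGamma (s / p) (k * (b / r) ^ p) := by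
  have hIoo : Set.Ioo (min 0 b) (max 0 b) = Set.Ioo 0 b := by
    rw [min_eq_left hb, max_eq_right hb]
  have hsub := intervalIntegral.integral_comp_mul_deriv_of_deriv_nonneg
    (f := fun x => k * (x / r) ^ p) (f' := fun x => k * (1 / r * p * (x / r) ^ (p - 1)))
    (g := fun u => u ^ (s / p - 1) * exp (-u)) (a := 0) (b := b)
    (by fun_prop (disch := exact hp.le))
    (fun x hx => (((hasDerivAt_id x).div_const r).rpow_const
      (Or.inl (by rw [hIoo] at hx; exact (div_pos hx.1 hr).ne'))).const_mul k)
    (fun x hx => by rw [hIoo] at hx; have := hx.1; positivity)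
  have hsp : s / p * p = s := div_mul_cancel₀ s hp.ne'
  simp only [Function.comp_apply] at hsub
  rw [intervalIntegral.integral_congr_Ioo_of_le hb
    (fun x hx => rpow_sub_one_mul_exp_neg_comp_mul_deriv (a := s / p) hk hr hx.1), hsp,
    intervalIntegral.integral_const_mul, zero_div, zero_rpow hp.ne', mul_zero] at hsub
  rw [lowerGamma, ← hsub]
  field_simp

lemma integral_rpow_sub_one_mul_exp_neg_mul_div_rpow {p k r b : ℝ} (hp : 0 < p) (hk : 0 < k)
    (hr : 0 < r) (hb : 0 ≤ b) :
    ∫ x in (0:ℝ)..b, x ^ (p - 1) * exp (-(k * (x / r) ^ p)) =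
      r ^ p / (p * k) * (1 - exp (-(k * (b / r) ^ p))) := by
  rw [integral_rpow_mul_exp_neg_mul_div_rpow hp hk hr hb, div_self hp.ne', rpow_one,
    lowerGamma_one]

lemma integral_rpow_sub_one_mul_one_sub_exp_neg_mul_div_rpow {s p k r b : ℝ} (hs : 0 < s)
    (hp : 0 < p) (hk : 0 < k) (hr : 0 < r) (hb : 0 ≤ b) :
    ∫ y in (0:ℝ)..b, (y ^ (s - 1) - y ^ (s - 1) * exp (-(k * (y / r) ^ p))) =
      b ^ s / s - r ^ s / (p * k ^ (s / p)) * lowerGamma (s / p) (k * (b / r) ^ p) := by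
  have hs1 : -1 < s - 1 := by linarith
  rw [intervalIntegral.integral_sub (intervalIntegral.intervalIntegrable_rpow' hs1)
      ((intervalIntegral.intervalIntegrable_rpow' hs1).mul_continuousOn
        (by fun_prop (disch := positivity))),
    integral_rpow (Or.inl hs1), integral_rpow_mul_exp_neg_mul_div_rpow hp hk hr hb,
    sub_add_cancel, zero_rpow hs.ne', sub_zero]

theorem stmt8 (lam ρo Pu Td ηc ηd : ℝ) (hlam : 0 < lam) (hρ : 0 < ρo) (hPu : 0 < Pu)
    (hc : 2 < ηc) (hd : 2 < ηd) (hTd : 1 < Td) :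
    (∫ y in (0:ℝ)..Pu,
        (2 * y ^ (2 / ηd - 1) / (ηd * Pu ^ (2 / ηd))) *
          ∫ x in (0:ℝ)..(min (y / Td) Pu),
            2 * π * lam * x ^ (2 / ηc - 1) * Real.exp (-(π * lam * (x / ρo) ^ (2 / ηc))) /
              (ηc * ρo ^ (2 / ηc) *
                (1 - Real.exp (-(π * lam * (Pu / ρo) ^ (2 / ηc)))))) =
      1 / (1 - Real.exp (-(π * lam * (Pu / ρo) ^ (2 / ηc)))) -
        ηc * (Td * ρo) ^ (2 / ηd) *
            lowerGamma (ηc / ηd) (π * lam * (Pu / (Td * ρo)) ^ (2 / ηc)) /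
          (ηd * Pu ^ (2 / ηd) * (π * lam) ^ (ηc / ηd) *
            (1 - Real.exp (-(π * lam * (Pu / ρo) ^ (2 / ηc))))) := by
  have hηc : 0 < ηc := by linarith
  have hk : 0 < π * lam := by positivity
  set p := 2 / ηc with hp_def
  set s := 2 / ηd with hs_def
  set C := 1 - exp (-(π * lam * (Pu / ρo) ^ p))
  have hC : 0 < C := sub_pos.2 (exp_lt_one_iff.2 (neg_lt_zero.2 (by positivity)))
  have hinner : ∀ y ∈ Set.uIcc 0 Pu,
      2 * y ^ (s - 1) / (ηd * Pu ^ s) * (∫ x in (0:ℝ)..(min (y / Td) Pu),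
        2 * π * lam * x ^ (p - 1) * exp (-(π * lam * (x / ρo) ^ p)) / (ηc * ρo ^ p * C)) =
      2 / (ηd * Pu ^ s * C) *
        (y ^ (s - 1) - y ^ (s - 1) * exp (-(π * lam * (y / (Td * ρo)) ^ p))) := by
    intro y hy
    rw [Set.uIcc_of_le hPu.le] at hy
    have hpdf : (fun x => 2 * π * lam * x ^ (p - 1) * exp (-(π * lam * (x / ρo) ^ p)) /
          (ηc * ρo ^ p * C)) =
        fun x => 2 * π * lam / (ηc * ρo ^ p * C) *
          (x ^ (p - 1) * exp (-(π * lam * (x / ρo) ^ p))) := by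
      funext x; ring
    rw [min_eq_left ((div_le_self hy.1 hTd.le).trans hy.2), hpdf,
      intervalIntegral.integral_const_mul,
      integral_rpow_sub_one_mul_exp_neg_mul_div_rpow (by positivity) hk hρ
        (div_nonneg hy.1 (by linarith)), div_div, hp_def]
    field_simp
  rw [intervalIntegral.integral_congr hinner, intervalIntegral.integral_const_mul,
    integral_rpow_sub_one_mul_one_sub_exp_neg_mul_div_rpow (by positivity) (by positivity) hk
      (by positivity) hPu.le,
    show s / p = ηc / ηd by rw [hs_def, hp_def]; field_simp, hs_def, hp_def]
  field_simp
end

section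
/- Let λ > 0, ρ_o > 0, η_c > 2. The function M(ρ_o) = ρ_o · γ(η_c/2 + 1, πλ(P_u/ρ_o)^{2/η_c}) / ((πλ)^{η_c/2}(1 − e^{−πλ(P_u/ρ_o)^{2/η_c}})), the mean cellular transmit power E[P₂] with α = 1, is monotonically increasing in ρ_o on (0, P_u], and M(ρ_o) ≤ P_u for all ρ_o ∈ (0, P_u]. -/
open Real MeasureTheory

/-! With `s = η_c / 2` and `t = πλ (P_u / ρ_o)^{2/η_c}`, which decreases in `ρ_o`, one has
`t^s = (πλ)^s P_u / ρ_o`, so the mean power is `P_u · γ(s + 1, t) / (t^s (1 - e^{-t}))`.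
The bound `γ(s + 1, t) ≤ t^s (1 - e^{-t})` comes from `x^s ≤ t^s` under the integral.
For monotonicity in `ρ_o`, the ratio must decrease in `t`: numerator and denominator vanish
at `0`, and the quotient of their derivatives, `s (eˣ - 1) / x + 1`, increases by convexity of
`exp`. This monotone l'Hôpital rule is proved in integrated form: for `c ≤ t`, compare the two
integrands through their derivative quotient `k` at `c`, on `[0, c]` and on `[c, t]`. -/

open Set intervalIntegral

theorem integral_mul_integral_le_of_single_crossing {f g : ℝ → ℝ} {a c t k : ℝ}
    (hac : a ≤ c) (hct : c ≤ t) (hf : IntervalIntegrable f volume a t)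
    (hg : IntervalIntegrable g volume a t) (hg0 : ∀ x ∈ Ioo a t, 0 ≤ g x)
    (hle : ∀ x ∈ Ioo a c, f x ≤ k * g x) (hge : ∀ x ∈ Ioo c t, k * g x ≤ f x) :
    (∫ x in a..t, g x) * (∫ x in a..c, f x) ≤ (∫ x in a..c, g x) * (∫ x in a..t, f x) := by
  have hsub₁ : uIcc a c ⊆ uIcc a t := by
    rw [uIcc_of_le hac, uIcc_of_le (hac.trans hct)]; exact Icc_subset_Icc_right hct
  have hsub₂ : uIcc c t ⊆ uIcc a t := by
    rw [uIcc_of_le hct, uIcc_of_le (hac.trans hct)]; exact Icc_subset_Icc_left hac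
  have hf₁ := hf.mono_set hsub₁
  have hf₂ := hf.mono_set hsub₂
  have hg₁ := hg.mono_set hsub₁
  have hg₂ := hg.mono_set hsub₂
  rw [← integral_add_adjacent_intervals hf₁ hf₂, ← integral_add_adjacent_intervals hg₁ hg₂]
  have hF₁ : ∫ x in a..c, f x ≤ k * ∫ x in a..c, g x := by
    rw [← intervalIntegral.integral_const_mul]
    exact integral_mono_on_of_le_Ioo hac hf₁ (hg₁.const_mul k) hle
  have hF₂ : k * ∫ x in c..t, g x ≤ ∫ x in c..t, f x := by
    rw [← intervalIntegral.integral_const_mul]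
    exact integral_mono_on_of_le_Ioo hct (hg₂.const_mul k) hf₂ hge
  have hG₁ : 0 ≤ ∫ x in a..c, g x := by
    simpa using integral_mono_on_of_le_Ioo hac intervalIntegrable_const hg₁
      fun x hx => hg0 x ⟨hx.1, hx.2.trans_le hct⟩
  have hG₂ : 0 ≤ ∫ x in c..t, g x := by
    simpa using integral_mono_on_of_le_Ioo hct intervalIntegrable_const hg₂
      fun x hx => hg0 x ⟨hac.trans_lt hx.1, hx.2⟩
  nlinarith [mul_le_mul_of_nonneg_left hF₁ hG₂, mul_le_mul_of_nonneg_left hF₂ hG₁]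

theorem exp_sub_one_div_le_exp_sub_one_div {x y : ℝ} (hx : 0 < x) (hxy : x ≤ y) :
    (exp x - 1) / x ≤ (exp y - 1) / y := by
  simpa using convexOn_exp.secant_mono (a := 0) trivial trivial trivial hx.ne'
    (hx.trans_le hxy).ne' hxy

theorem hasDerivAt_rpow_mul_one_sub_exp_neg {s : ℝ} (hs : 1 ≤ s) (x : ℝ) :
    HasDerivAt (fun x => x ^ s * (1 - exp (-x)))
      (s * x ^ (s - 1) * (1 - exp (-x)) + x ^ s * exp (-x)) x := by
  have h := (hasDerivAt_rpow_const (x := x) (Or.inr hs)).mul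
    (((hasDerivAt_neg x).exp).const_sub 1)
  simpa [Pi.mul_def] using h

theorem deriv_rpow_mul_one_sub_exp_neg_eq_mul {s x : ℝ} (hx : 0 < x) :
    s * x ^ (s - 1) * (1 - exp (-x)) + x ^ s * exp (-x)
      = (s * ((exp x - 1) / x) + 1) * (x ^ s * exp (-x)) := by
  rw [rpow_sub_one hx.ne', exp_neg]
  field_simp

theorem lowerGamma_add_one (s t : ℝ) :
    lowerGamma (s + 1) t = ∫ x in (0:ℝ)..t, x ^ s * exp (-x) := by
  simp [lowerGamma]

theorem rpow_mul_one_sub_exp_neg_pos (s : ℝ) {t : ℝ} (ht : 0 < t) : 0 < t ^ s * (1 - exp (-t)) :=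
  mul_pos (rpow_pos_of_pos ht s) (sub_pos.2 (exp_lt_one_iff.2 (neg_lt_zero.2 ht)))

theorem lowerGamma_add_one_le {s t : ℝ} (hs : 0 ≤ s) (ht : 0 ≤ t) :
    lowerGamma (s + 1) t ≤ t ^ s * (1 - exp (-t)) := by
  have hexp : ∫ x in (0:ℝ)..t, exp (-x) = 1 - exp (-t) := by
    simp [integral_comp_neg (fun x => exp x)]
  have hcont : Continuous fun x : ℝ => x ^ s * exp (-x) := by
    fun_prop (disch := exact hs)
  calc lowerGamma (s + 1) t = ∫ x in (0:ℝ)..t, x ^ s * exp (-x) := lowerGamma_add_one s t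
    _ ≤ ∫ x in (0:ℝ)..t, t ^ s * exp (-x) :=
      integral_mono_on ht (hcont.intervalIntegrable 0 t)
        ((continuous_const.mul (by fun_prop)).intervalIntegrable 0 t) fun x hx =>
        mul_le_mul_of_nonneg_right (rpow_le_rpow hx.1 hx.2 hs) (exp_pos _).le
    _ = t ^ s * (1 - exp (-t)) := by rw [intervalIntegral.integral_const_mul, hexp]

noncomputable def lowerGammaRatio (s t : ℝ) : ℝ :=
  lowerGamma (s + 1) t / (t ^ s * (1 - exp (-t)))

theorem lowerGammaRatio_le_one {s t : ℝ} (hs : 0 ≤ s) (ht : 0 < t) : lowerGammaRatio s t ≤ 1 :=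
  div_le_one_of_le₀ (lowerGamma_add_one_le hs ht.le) (rpow_mul_one_sub_exp_neg_pos s ht).le

theorem antitoneOn_lowerGammaRatio {s : ℝ} (hs : 1 ≤ s) :
    AntitoneOn (lowerGammaRatio s) (Ioi 0) := by
  intro c (hc : 0 < c) t (ht : 0 < t) hct
  set f : ℝ → ℝ := fun x => s * x ^ (s - 1) * (1 - exp (-x)) + x ^ s * exp (-x)
  set g : ℝ → ℝ := fun x => x ^ s * exp (-x)
  have hfc : Continuous f := by fun_prop (disch := linarith)
  have hgc : Continuous g := by fun_prop (disch := linarith)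
  have hB : ∀ u, u ^ s * (1 - exp (-u)) = ∫ x in (0:ℝ)..u, f x := fun u => by
    rw [integral_eq_sub_of_hasDerivAt (fun x _ => hasDerivAt_rpow_mul_one_sub_exp_neg hs x)
      (hfc.intervalIntegrable 0 u)]
    simp
  rw [lowerGammaRatio, lowerGammaRatio,
    div_le_div_iff₀ (rpow_mul_one_sub_exp_neg_pos s ht) (rpow_mul_one_sub_exp_neg_pos s hc),
    lowerGamma_add_one, lowerGamma_add_one, hB, hB]
  have hg0 : ∀ x, 0 < x → 0 ≤ g x := fun x hx => mul_nonneg (rpow_nonneg hx.le s) (exp_pos _).le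
  have hk : ∀ x y : ℝ, 0 < x → x ≤ y → s * ((exp x - 1) / x) + 1 ≤ s * ((exp y - 1) / y) + 1 :=
    fun x y hx hxy => by
      have := exp_sub_one_div_le_exp_sub_one_div hx hxy
      nlinarith
  refine integral_mul_integral_le_of_single_crossing (k := s * ((exp c - 1) / c) + 1) hc.le hct
    (hfc.intervalIntegrable 0 t) (hgc.intervalIntegrable 0 t) (fun x hx => hg0 x hx.1)
    (fun x hx => ?_) (fun x hx => ?_)
  · rw [show f x = _ from deriv_rpow_mul_one_sub_exp_neg_eq_mul hx.1]
    exact mul_le_mul_of_nonneg_right (hk x c hx.1 hx.2.le) (hg0 x hx.1)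
  · rw [show f x = _ from deriv_rpow_mul_one_sub_exp_neg_eq_mul (hc.trans hx.1)]
    exact mul_le_mul_of_nonneg_right (hk c x hc hx.1.le) (hg0 x (hc.trans hx.1))

theorem mul_rpow_two_div_rpow_div_two {a b η : ℝ} (ha : 0 ≤ a) (hb : 0 ≤ b) (hη : η ≠ 0) :
    (a * b ^ (2 / η)) ^ (η / 2) = a ^ (η / 2) * b := by
  rw [mul_rpow ha (rpow_nonneg hb _), ← rpow_mul hb, div_mul_div_comm, mul_comm 2 η,
    div_self (mul_ne_zero hη two_ne_zero), rpow_one]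

theorem mul_lowerGamma_div_eq {a P ρ η : ℝ} (ha : 0 ≤ a) (hP : 0 < P) (hρ : 0 < ρ) (hη : η ≠ 0) :
    ρ * lowerGamma (η / 2 + 1) (a * (P / ρ) ^ (2 / η)) /
        (a ^ (η / 2) * (1 - exp (-(a * (P / ρ) ^ (2 / η)))))
      = P * lowerGammaRatio (η / 2) (a * (P / ρ) ^ (2 / η)) := by
  rw [lowerGammaRatio, mul_rpow_two_div_rpow_div_two ha (div_pos hP hρ).le hη]
  field_simp

theorem stmt19 (lam Pu ηc : ℝ) (hlam : 0 < lam) (hPu : 0 < Pu) (hc : 2 < ηc) :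
    MonotoneOn (fun ρo : ℝ =>
        ρo * lowerGamma (ηc / 2 + 1) (π * lam * (Pu / ρo) ^ (2 / ηc)) /
          ((π * lam) ^ (ηc / 2) *
            (1 - Real.exp (-(π * lam * (Pu / ρo) ^ (2 / ηc)))))) (Set.Ioc 0 Pu) ∧
    ∀ ρo ∈ Set.Ioc (0:ℝ) Pu,
      ρo * lowerGamma (ηc / 2 + 1) (π * lam * (Pu / ρo) ^ (2 / ηc)) /
          ((π * lam) ^ (ηc / 2) *
            (1 - Real.exp (-(π * lam * (Pu / ρo) ^ (2 / ηc))))) ≤ Pu := by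
  have hπlam : 0 < π * lam := by positivity
  have hη : ηc ≠ 0 := by linarith
  have hT : ∀ {ρ : ℝ}, 0 < ρ → 0 < π * lam * (Pu / ρ) ^ (2 / ηc) := fun hρ =>
    mul_pos hπlam (rpow_pos_of_pos (div_pos hPu hρ) _)
  refine ⟨fun ρ hρ ρ' hρ' hρρ' => ?_, fun ρ hρ => ?_⟩
  · have hTle : π * lam * (Pu / ρ') ^ (2 / ηc) ≤ π * lam * (Pu / ρ) ^ (2 / ηc) := by
      gcongr
      exacts [(div_pos hPu hρ'.1).le, hρ.1]
    dsimp only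
    rw [mul_lowerGamma_div_eq hπlam.le hPu hρ.1 hη, mul_lowerGamma_div_eq hπlam.le hPu hρ'.1 hη]
    exact mul_le_mul_of_nonneg_left
      (antitoneOn_lowerGammaRatio (by linarith) (hT hρ'.1) (hT hρ.1) hTle) hPu.le
  · rw [mul_lowerGamma_div_eq hπlam.le hPu hρ.1 hη]
    exact mul_le_of_le_one_right hPu.le (lowerGammaRatio_le_one (by linarith) (hT hρ.1))
end
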